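/- For N > 0 define E^B(N) := inf{ x² + x(4λ − 2√(λ(1+λ))) + 2λ² + λ(1+λ) : λ ≥ 0, x ≥ 0, λ + x = N }. Then E^B(N) = N² − N + O(N^{2/3}) as N → ∞; that is, there exist constants C > 0 and N₀ > 0 such that |E^B(N) − (N² − N)| ≤ C·N^{2/3} for all N ≥ N₀. -/

import Mathlib

noncomputable section

/-- The Bogoliubov ground state energy of the toy model with one-mode Hilbert space and
Hamiltonian `a*a*aa`:
`E^B(N) = inf { x² + x(4λ − 2√(λ(1+λ))) + 2λ² + λ(1+λ) : λ ≥ 0, x ≥ 0, λ + x = N }`. -/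
def toyBogoliubovEnergy (N : ℝ) : ℝ :=
  sInf {E : ℝ | ∃ lam x : ℝ, 0 ≤ lam ∧ 0 ≤ x ∧ lam + x = N ∧
    E = x ^ 2 + x * (4 * lam - 2 * Real.sqrt (lam * (1 + lam))) + 2 * lam ^ 2
        + lam * (1 + lam)}

/-!
Writing `N = λ + x`, the Bogoliubov functional exceeds `N² − N` by exactly
`x (2λ + 1 − 2√(λ(1+λ))) + 2λ(λ + 1)`. Both terms are nonnegative, which gives the lower
bound. The gap `2λ + 1 − 2√(λ(1+λ))` is the reciprocal of `2λ + 1 + 2√(λ(1+λ))`, so the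
excess is at most `N / (2λ + 1) + 2λ(λ + 1)`; the choice `λ = N^{1/3}` balances the two
terms at order `N^{2/3}`.
-/

namespace ToyBogoliubov

def energy (lam x : ℝ) : ℝ :=
  x ^ 2 + x * (4 * lam - 2 * Real.sqrt (lam * (1 + lam))) + 2 * lam ^ 2 + lam * (1 + lam)

/-- Equal to `(√(λ+1) − √λ)²`. -/
def gap (lam : ℝ) : ℝ := 2 * lam + 1 - 2 * Real.sqrt (lam * (1 + lam))

lemma energy_sub_eq (lam x : ℝ) :
    energy lam x - ((lam + x) ^ 2 - (lam + x)) = x * gap lam + 2 * lam * (lam + 1) := by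
  unfold energy gap
  ring

variable {lam : ℝ}

lemma sq_sqrt_mul_one_add (hl : 0 ≤ lam) :
    Real.sqrt (lam * (1 + lam)) ^ 2 = lam * (1 + lam) :=
  Real.sq_sqrt (by positivity)

lemma gap_nonneg (hl : 0 ≤ lam) : 0 ≤ gap lam := by
  have hs := sq_sqrt_mul_one_add hl
  have hs0 := Real.sqrt_nonneg (lam * (1 + lam))
  unfold gap
  nlinarith

lemma mul_gap_le_one (hl : 0 ≤ lam) : (2 * lam + 1) * gap lam ≤ 1 := by
  have hs := sq_sqrt_mul_one_add hl
  have hs0 := Real.sqrt_nonneg (lam * (1 + lam))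
  have hgap_mul : gap lam * (2 * lam + 1 + 2 * Real.sqrt (lam * (1 + lam))) = 1 := by
    unfold gap
    nlinarith
  nlinarith [gap_nonneg hl]

lemma sub_le_energy {x : ℝ} (hl : 0 ≤ lam) (hx : 0 ≤ x) :
    (lam + x) ^ 2 - (lam + x) ≤ energy lam x := by
  have h := energy_sub_eq lam x
  nlinarith [mul_nonneg hx (gap_nonneg hl)]

lemma energy_le {x : ℝ} (hl : 0 ≤ lam) (hx : 0 ≤ x) :
    energy lam x ≤ (lam + x) ^ 2 - (lam + x) + x / (2 * lam + 1) + 2 * lam * (lam + 1) := by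
  have hgap : x * gap lam ≤ x / (2 * lam + 1) := by
    rw [le_div_iff₀ (by positivity)]
    nlinarith [mul_gap_le_one hl]
  linarith [energy_sub_eq lam x]

end ToyBogoliubov

open ToyBogoliubov

lemma sub_le_toyBogoliubovEnergy {N : ℝ} (hN : 0 ≤ N) : N ^ 2 - N ≤ toyBogoliubovEnergy N := by
  refine le_csInf ⟨energy 0 N, 0, N, le_rfl, hN, zero_add N, rfl⟩ ?_
  rintro E ⟨lam, x, hl, hx, rfl, rfl⟩
  exact sub_le_energy hl hx

lemma toyBogoliubovEnergy_le_energy {lam x : ℝ} (hl : 0 ≤ lam) (hx : 0 ≤ x) :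
    toyBogoliubovEnergy (lam + x) ≤ energy lam x := by
  refine csInf_le ⟨(lam + x) ^ 2 - (lam + x), ?_⟩ ⟨lam, x, hl, hx, rfl, rfl⟩
  rintro E ⟨lam', x', hl', hx', hsum, rfl⟩
  rw [← hsum]
  exact sub_le_energy hl' hx'

/-- The upper bound at `N = A³`, from the trial point `λ = A`. -/
lemma toyBogoliubovEnergy_cube_le {A : ℝ} (hA : 1 ≤ A) :
    toyBogoliubovEnergy (A ^ 3) ≤ (A ^ 3) ^ 2 - A ^ 3 + 5 * A ^ 2 := by
  have hx : 0 ≤ A ^ 3 - A := by nlinarith [mul_le_mul hA hA zero_le_one (by linarith : (0 : ℝ) ≤ A)]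
  have hdiv : (A ^ 3 - A) / (2 * A + 1) ≤ A ^ 2 := by
    rw [div_le_iff₀ (by linarith)]
    nlinarith
  have h := toyBogoliubovEnergy_le_energy (by linarith : (0 : ℝ) ≤ A) hx
  have h' := energy_le (by linarith : (0 : ℝ) ≤ A) hx
  rw [add_sub_cancel] at h h'
  nlinarith

/-- `E^B(N) = N² − N + O(N^{2/3})` as `N → ∞`: there exist constants
`C > 0` and `N₀ > 0` such that `|E^B(N) − (N² − N)| ≤ C·N^{2/3}` for all `N ≥ N₀`. -/
theorem toyBogoliubovEnergy_asymptotics :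
    ∃ C > (0 : ℝ), ∃ N₀ > (0 : ℝ), ∀ N : ℝ, N₀ ≤ N →
      |toyBogoliubovEnergy N - (N ^ 2 - N)| ≤ C * N ^ ((2 : ℝ) / 3) := by
  refine ⟨5, by norm_num, 1, one_pos, fun N hN => ?_⟩
  have hN0 : 0 ≤ N := by linarith
  set A := N ^ ((1 : ℝ) / 3)
  have hA1 : 1 ≤ A := Real.one_le_rpow hN (by norm_num)
  have hcube : A ^ 3 = N := by
    rw [← Real.rpow_natCast, ← Real.rpow_mul hN0]
    norm_num
  have hsq : N ^ ((2 : ℝ) / 3) = A ^ 2 := by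
    rw [← Real.rpow_natCast, ← Real.rpow_mul hN0]
    norm_num
  have hlower := sub_le_toyBogoliubovEnergy hN0
  have hupper := toyBogoliubovEnergy_cube_le hA1
  rw [hcube] at hupper
  rw [hsq, abs_le]
  constructor <;> nlinarith
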